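/- For η-almost every x ∈ X, k_n(x)/n → 1/2 as n → ∞ (almost-everywhere convergence, strengthening convergence in measure). -/

import Mathlib

open MeasureTheory Filter
open scoped ENNReal

/-- The Euler path space: a point is an infinite edge path in the Euler graph,
`x n : Fin (n+2)` being the label of the edge chosen from level `n` to level `n+1`. -/
abbrev EulerPath : Type := ∀ n : ℕ, Fin (n + 2)

/-- Vertex labels: `kv x n` is the `k` with the path `x` passing through vertex `(n,k)`.
A label `(x n : ℕ) ≤ kv x n` is a left turn (edge to `(n+1, kv x n)`), a larger label
is a right turn (edge to `(n+1, kv x n + 1)`). -/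
def kv (x : EulerPath) : ℕ → ℕ
  | 0 => 0
  | n + 1 => if (x n : ℕ) ≤ kv x n then kv x n else kv x n + 1

/-- The symmetric measure: the product over `n` of the uniform probability measures on
`Fin (n+2)`, characterized as the probability measure giving each cylinder of length `n`
the measure `∏_{i<n} 1/(i+2)`. -/
def IsSymmetricMeasure (η : Measure EulerPath) : Prop :=
  IsProbabilityMeasure η ∧
    ∀ (n : ℕ) (c : EulerPath),
      η {x | ∀ i < n, x i = c i} = ∏ i ∈ Finset.range n, ((i : ℝ≥0∞) + 2)⁻¹

open Topology

/-!
Write `D n = 2 k_n - n`. Given the first `n` edge labels, the label `x n` is uniform on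
`Fin (n + 2)` and exactly `k_n + 1` of its values are left turns, so `k_n` is a Markov chain and
`E[D (n+1)^2 | k_n] = D n^2 + 1 - 2 D n^2 / (n + 2) ≤ D n^2 + 1`; hence `E[D n^2] ≤ n`.
Along the squares, `∑ E[(D (m^2) / m^2)^2] ≤ ∑ 1 / m^2 < ∞`, so `D (m^2) / m^2 → 0` almost surely.
Since `D` moves by one at each step, this interpolates to `D n / n → 0`, i.e. `k_n / n → 1 / 2`.
-/

theorem abs_sub_le_of_abs_succ_sub_le {a : ℕ → ℝ} (ha : ∀ n, |a (n + 1) - a n| ≤ 1) {m n : ℕ}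
    (hmn : m ≤ n) : |a n - a m| ≤ (n - m : ℕ) := by
  rw [abs_sub_comm, ← Real.dist_eq]
  simpa using dist_le_Ico_sum_of_dist_le (d := fun _ => 1) hmn fun _ _ => by
    rw [Real.dist_eq, abs_sub_comm]; exact ha _

theorem tendsto_div_of_tendsto_sq_div {a : ℕ → ℝ} (ha : ∀ n, |a (n + 1) - a n| ≤ 1)
    (h : Tendsto (fun m : ℕ => a (m ^ 2) / (m ^ 2 : ℕ)) atTop (𝓝 0)) :
    Tendsto (fun n : ℕ => a n / n) atTop (𝓝 0) := by
  have hsqrt : Tendsto Nat.sqrt atTop atTop :=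
    tendsto_atTop_atTop.2 fun b => ⟨b ^ 2, fun n hn => Nat.le_sqrt'.2 hn⟩
  have hbound := (h.abs.add (tendsto_const_div_atTop_nhds_zero_nat 2)).comp hsqrt
  rw [abs_zero, zero_add] at hbound
  refine squeeze_zero_norm' ?_ hbound
  filter_upwards [eventually_ge_atTop 1] with n hn
  have hs := Nat.sqrt_pos.2 hn
  have hlo := Nat.sqrt_le' n
  have hhi : n < n.sqrt ^ 2 + 2 * n.sqrt + 1 := by
    have := Nat.lt_succ_sqrt' n
    rwa [Nat.succ_eq_add_one, add_sq, mul_one, one_pow] at this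
  set s := n.sqrt
  have han : |a n| ≤ |a (s ^ 2)| + 2 * s := by
    have : ((n - s ^ 2 : ℕ) : ℝ) ≤ 2 * s := by exact_mod_cast (by omega : n - s ^ 2 ≤ 2 * s)
    linarith [abs_sub_abs_le_abs_sub (a n) (a (s ^ 2)), abs_sub_le_of_abs_succ_sub_le ha hlo]
  have hsn : ((s ^ 2 : ℕ) : ℝ) ≤ n := by exact_mod_cast hlo
  show |a n / n| ≤ |a (s ^ 2) / (s ^ 2 : ℕ)| + 2 / s
  rw [abs_div, Nat.abs_cast, abs_div, Nat.abs_cast]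
  calc |a n| / n ≤ (|a (s ^ 2)| + 2 * s) / (s ^ 2 : ℕ) := by gcongr
    _ = _ := by push_cast; field_simp

theorem ae_tendsto_zero_of_tsum_lintegral_sq_ne_top {Ω : Type*} [MeasurableSpace Ω]
    {μ : Measure Ω} {X : ℕ → Ω → ℝ} (hX : ∀ n, AEMeasurable (X n) μ)
    (h : ∑' n, ∫⁻ ω, ENNReal.ofReal (X n ω ^ 2) ∂μ ≠ ∞) :
    ∀ᵐ ω ∂μ, Tendsto (fun n => X n ω) atTop (𝓝 0) := by
  have hX2 (n : ℕ) : AEMeasurable (fun ω => ENNReal.ofReal (X n ω ^ 2)) μ :=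
    ((hX n).pow_const 2).ennreal_ofReal
  rw [← lintegral_tsum hX2] at h
  filter_upwards [ae_lt_top' (AEMeasurable.tsum hX2) h] with ω hω
  have hsq := (ENNReal.tendsto_toReal ENNReal.zero_ne_top).comp
    (ENNReal.tendsto_atTop_zero_of_tsum_ne_top hω.ne)
  simp only [Function.comp_def, ENNReal.toReal_ofReal (sq_nonneg _), ENNReal.toReal_zero] at hsq
  rw [tendsto_zero_iff_abs_tendsto_zero]
  simpa [Function.comp_def, Real.sqrt_sq_eq_abs] using hsq.sqrt

theorem lintegral_comp_eq_sum_mul {Ω α : Type*} [MeasurableSpace Ω] [Fintype α]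
    [MeasurableSpace α] [MeasurableSingletonClass α] {μ : Measure Ω} {T : Ω → α}
    (hT : Measurable T) {w : ℝ≥0∞} (hw : ∀ a, μ (T ⁻¹' {a}) = w) (g : α → ℝ≥0∞) :
    ∫⁻ ω, g (T ω) ∂μ = (∑ a, g a) * w := by
  rw [← lintegral_map (measurable_of_finite g) hT, lintegral_fintype, Finset.sum_mul]
  simp only [Measure.map_apply hT (measurableSet_singleton _), hw]

theorem Fin.sum_univ_ite_val_le {M : Type*} [AddCommMonoid M] {m k : ℕ} (hk : k < m)
    (a b : M) :
    ∑ j : Fin m, (if (j : ℕ) ≤ k then a else b) = (k + 1) • a + (m - (k + 1)) • b := by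
  have hle : (Finset.univ.filter fun j : Fin m => (j : ℕ) ≤ k).card = k + 1 := by
    simpa [Nat.lt_succ_iff, Nat.min_eq_right hk] using
      Fin.card_filter_val_lt (n := m) (m := k + 1)
  have hgt := Finset.card_filter_add_card_filter_not (s := Finset.univ)
    (fun j : Fin m => (j : ℕ) ≤ k)
  rw [Finset.sum_ite, Finset.sum_const, Finset.sum_const, hle]
  rw [hle, Finset.card_univ, Fintype.card_fin] at hgt
  rw [show (Finset.univ.filter fun j : Fin m => ¬(j : ℕ) ≤ k).card = m - (k + 1) by omega]

theorem kv_succ (x : EulerPath) (n : ℕ) :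
    kv x (n + 1) = if (x n : ℕ) ≤ kv x n then kv x n else kv x n + 1 := rfl

theorem kv_congr {x y : EulerPath} {n : ℕ} (h : ∀ i < n, x i = y i) : kv x n = kv y n := by
  induction n with
  | zero => rfl
  | succ n ih => simp only [kv, ih fun i hi => h i (by omega), h n n.lt_add_one]

theorem kv_le (x : EulerPath) (n : ℕ) : kv x n ≤ n := by
  induction n with
  | zero => rfl
  | succ n ih => simp only [kv]; split <;> omega

abbrev EulerPrefix (n : ℕ) : Type := ∀ i : Fin n, Fin (i + 2)

def prefixOf (n : ℕ) (x : EulerPath) : EulerPrefix n := fun i => x i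

def extendPrefix {n : ℕ} (c : EulerPrefix n) : EulerPath :=
  fun i => if h : i < n then c ⟨i, h⟩ else 0

theorem measurable_prefixOf (n : ℕ) : Measurable (prefixOf n) :=
  measurable_pi_lambda _ fun i => measurable_pi_apply (i : ℕ)

theorem prefixOf_eq_iff {n : ℕ} {x : EulerPath} {c : EulerPrefix n} :
    prefixOf n x = c ↔ ∀ i < n, x i = extendPrefix c i := by
  simp only [prefixOf, extendPrefix, funext_iff, Fin.forall_iff]
  exact forall₂_congr fun i hi => by rw [dif_pos hi]

theorem prefixOf_preimage_singleton {n : ℕ} (c : EulerPrefix n) :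
    prefixOf n ⁻¹' {c} = {x | ∀ i < n, x i = extendPrefix c i} :=
  Set.ext fun _ => prefixOf_eq_iff

theorem prefixOf_eval_preimage_singleton {n : ℕ} (c : EulerPrefix n) (j : Fin (n + 2)) :
    (fun x => (prefixOf n x, x n)) ⁻¹' {(c, j)} =
      {x | ∀ i < n + 1, x i = Function.update (extendPrefix c) n j i} := by
  ext x
  simp only [Set.mem_preimage, Set.mem_singleton_iff, Prod.mk.injEq, prefixOf_eq_iff,
    Set.mem_ofPred_eq, Nat.lt_succ_iff_lt_or_eq, or_imp, forall_and, forall_eq,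
    Function.update_self]
  exact and_congr_left' (forall₂_congr fun i hi => by rw [Function.update_of_ne hi.ne])

theorem kv_extendPrefix_prefixOf (x : EulerPath) (n : ℕ) :
    kv (extendPrefix (prefixOf n x)) n = kv x n :=
  kv_congr fun i hi => by simp [extendPrefix, prefixOf, hi]

theorem measurable_kv (n : ℕ) : Measurable fun x => kv x n := by
  have := (measurable_of_finite fun c : EulerPrefix n => kv (extendPrefix c) n).comp
    (measurable_prefixOf n)
  simpa only [Function.comp_def, kv_extendPrefix_prefixOf] using this

theorem lintegral_comp_kv_succ {η : Measure EulerPath} (hη : IsSymmetricMeasure η) (n : ℕ)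
    (φ : ℕ → ℝ≥0∞) :
    ∫⁻ x, φ (kv x (n + 1)) ∂η =
      ∫⁻ x, ((kv x n + 1 : ℕ) * φ (kv x n) + (n + 1 - kv x n : ℕ) * φ (kv x n + 1)) / (n + 2)
        ∂η := by
  let K : EulerPrefix n → ℕ := fun c => kv (extendPrefix c) n
  have hK (x : EulerPath) : kv x n = K (prefixOf n x) := (kv_extendPrefix_prefixOf x n).symm
  let step (c : EulerPrefix n) (j : Fin (n + 2)) : ℕ := if (j : ℕ) ≤ K c then K c else K c + 1
  have hsum (c : EulerPrefix n) :
      ∑ j, φ (step c j) = (K c + 1 : ℕ) * φ (K c) + (n + 1 - K c : ℕ) * φ (K c + 1) := by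
    have : K c ≤ n := kv_le _ _
    simp only [step, apply_ite φ]
    rw [Fin.sum_univ_ite_val_le (by omega), nsmul_eq_mul, nsmul_eq_mul]
    congr 3; omega
  calc ∫⁻ x, φ (kv x (n + 1)) ∂η
      = ∫⁻ x, (fun p : EulerPrefix n × Fin (n + 2) => φ (step p.1 p.2)) (prefixOf n x, x n) ∂η := by
        simp only [kv_succ, hK]; rfl
    _ = (∑ c, ∑ j, φ (step c j)) * ∏ i ∈ Finset.range (n + 1), ((i : ℝ≥0∞) + 2)⁻¹ := by
        rw [← Fintype.sum_prod_type']
        exact lintegral_comp_eq_sum_mul ((measurable_prefixOf n).prodMk (measurable_pi_apply n))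
          (fun p => by rw [prefixOf_eval_preimage_singleton]; exact hη.2 _ _)
          (fun p => φ (step p.1 p.2))
    _ = (∑ c, ((K c + 1 : ℕ) * φ (K c) + (n + 1 - K c : ℕ) * φ (K c + 1)) / (n + 2)) *
          ∏ i ∈ Finset.range n, ((i : ℝ≥0∞) + 2)⁻¹ := by
        simp only [hsum, Finset.prod_range_succ, div_eq_mul_inv, ← Finset.sum_mul]
        ring
    _ = _ := by
        rw [← lintegral_comp_eq_sum_mul (measurable_prefixOf n)
          fun c => by rw [prefixOf_preimage_singleton]; exact hη.2 _ _]
        simp only [hK]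

theorem ofReal_sq_drift_step_le {n k : ℕ} (hk : k ≤ n) :
    ((k + 1 : ℕ) * ENNReal.ofReal ((2 * k - (n + 1 : ℕ)) ^ 2) +
        (n + 1 - k : ℕ) * ENNReal.ofReal ((2 * (k + 1 : ℕ) - (n + 1 : ℕ)) ^ 2)) / (n + 2) ≤
      ENNReal.ofReal ((2 * k - n) ^ 2) + 1 := by
  rw [ENNReal.div_le_iff (by positivity) (by simp), ← ENNReal.ofReal_natCast (k + 1),
    ← ENNReal.ofReal_natCast (n + 1 - k), ← ENNReal.ofReal_mul (by positivity),
    ← ENNReal.ofReal_mul (by positivity), ← ENNReal.ofReal_add (by positivity) (by positivity),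
    ← ENNReal.ofReal_one, ← ENNReal.ofReal_add (by positivity) zero_le_one,
    ← ENNReal.ofReal_natCast n, ← ENNReal.ofReal_ofNat 2,
    ← ENNReal.ofReal_add (by positivity) zero_le_two, ← ENNReal.ofReal_mul (by positivity)]
  refine ENNReal.ofReal_le_ofReal ?_
  push_cast [Nat.cast_sub (by omega : k ≤ n + 1)]
  nlinarith [sq_nonneg (2 * (k : ℝ) - n)]

namespace EulerPath

def drift (x : EulerPath) (n : ℕ) : ℝ := 2 * kv x n - n

theorem abs_drift_succ_sub_le (x : EulerPath) (n : ℕ) : |x.drift (n + 1) - x.drift n| ≤ 1 := by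
  rw [drift, drift, kv_succ]
  split <;> push_cast <;> rw [abs_le] <;> constructor <;> linarith

variable {η : Measure EulerPath}

theorem lintegral_ofReal_drift_sq_le (hη : IsSymmetricMeasure η) (n : ℕ) :
    ∫⁻ x, ENNReal.ofReal (x.drift n ^ 2) ∂η ≤ n := by
  induction n with
  | zero => simp [drift, kv]
  | succ n ih =>
    have : IsProbabilityMeasure η := hη.1
    calc ∫⁻ x, ENNReal.ofReal (x.drift (n + 1) ^ 2) ∂η
        ≤ ∫⁻ x, (ENNReal.ofReal (x.drift n ^ 2) + 1) ∂η :=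
          (lintegral_comp_kv_succ hη n fun k => ENNReal.ofReal ((2 * k - (n + 1 : ℕ)) ^ 2)).trans_le
            (lintegral_mono fun x => ofReal_sq_drift_step_le (kv_le x n))
      _ ≤ n + 1 := by
          rw [lintegral_add_right _ measurable_const, lintegral_const, measure_univ, one_mul]
          gcongr
      _ = (n + 1 : ℕ) := by push_cast; rfl

theorem ae_tendsto_drift_div_sq (hη : IsSymmetricMeasure η) :
    ∀ᵐ x ∂η, Tendsto (fun m : ℕ => x.drift (m ^ 2) / ((m ^ 2 : ℕ) : ℝ)) atTop (𝓝 0) := by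
  refine ae_tendsto_zero_of_tsum_lintegral_sq_ne_top (fun m => ?_) ?_
  · exact ((measurable_of_countable fun k : ℕ => (2 * k - (m ^ 2 : ℕ) : ℝ) / (m ^ 2 : ℕ)).comp
      (measurable_kv _)).aemeasurable
  have hbound (m : ℕ) : ∫⁻ x, ENNReal.ofReal ((x.drift (m ^ 2) / ((m ^ 2 : ℕ) : ℝ)) ^ 2) ∂η ≤
      ENNReal.ofReal (1 / (m : ℝ) ^ 2) := by
    calc _ = (∫⁻ x, ENNReal.ofReal (x.drift (m ^ 2) ^ 2) ∂η) *
            ENNReal.ofReal ((((m ^ 2 : ℕ) : ℝ) ^ 2)⁻¹) := by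
          rw [← lintegral_mul_const' _ _ ENNReal.ofReal_ne_top]
          exact lintegral_congr fun x => by
            rw [div_pow, div_eq_mul_inv, ENNReal.ofReal_mul (sq_nonneg _)]
      _ ≤ ((m ^ 2 : ℕ) : ℝ≥0∞) * ENNReal.ofReal ((((m ^ 2 : ℕ) : ℝ) ^ 2)⁻¹) := by
          gcongr; exact lintegral_ofReal_drift_sq_le hη _
      _ = _ := by
          rw [← ENNReal.ofReal_natCast, ← ENNReal.ofReal_mul (by positivity)]
          rcases eq_or_ne m 0 with rfl | hm
          · simp
          · congr 1; push_cast; field_simp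
  refine ne_top_of_le_ne_top ?_ (ENNReal.tsum_le_tsum hbound)
  rw [← ENNReal.ofReal_tsum_of_nonneg (fun _ => by positivity)
    (Real.summable_one_div_nat_pow.2 one_lt_two)]
  exact ENNReal.ofReal_ne_top

end EulerPath

/-- For `η`-almost every path `x`, `k_n(x)/n → 1/2`. -/
theorem euler_kn_over_n_tendsto_half_ae
    (η : Measure EulerPath) (hη : IsSymmetricMeasure η) :
    ∀ᵐ x ∂η, Tendsto (fun n => (kv x n : ℝ) / (n : ℝ)) atTop (nhds (1 / 2)) := by
  filter_upwards [EulerPath.ae_tendsto_drift_div_sq hη] with x hx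
  have hdrift := tendsto_div_of_tendsto_sq_div x.abs_drift_succ_sub_le hx
  have hhalf : Tendsto (fun n : ℕ => 1 / 2 + x.drift n / n / 2) atTop (𝓝 (1 / 2)) := by
    simpa using (hdrift.div_const 2).const_add (1 / 2 : ℝ)
  refine hhalf.congr' ?_
  filter_upwards [eventually_ne_atTop 0] with n hn
  rw [EulerPath.drift]
  field_simp
  ring
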